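/- Let N_H ≥ 1, f ≥ 1, h ≥ 1 and let R ∈ ℝ with 0 ≤ R ≤ 1. Under the uniform distribution on all N_H^{h·f} h-tuples (F_1, …, F_h) of N_H × f column-regular binary matrices, the probability that the number of initially extractable columns is strictly less than R·f is at most 1 − Σ_{e=⌈R·f⌉}^{f} Θ(N_H, f, h, e) / N_H^{h·f}. -/

import Mathlib

/-- The weight of row `i` of a binary matrix `F`: the number of nonzero entries in row `i`. -/
def rowWeight {m n : ℕ} (F : Matrix (Fin m) (Fin n) Bool) (i : Fin m) : ℕ :=
  (Finset.univ.filter (fun j => F i j = true)).card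

/-- The weight of column `j` of a binary matrix `F`: the number of nonzero entries in column `j`. -/
def colWeight {m n : ℕ} (F : Matrix (Fin m) (Fin n) Bool) (j : Fin n) : ℕ :=
  (Finset.univ.filter (fun i => F i j = true)).card

/-- A binary matrix is column-regular if every column contains exactly one nonzero entry. -/
def ColRegular {m n : ℕ} (F : Matrix (Fin m) (Fin n) Bool) : Prop :=
  ∀ j, colWeight F j = 1

/-- A stopping matrix: a column-regular binary matrix with no row of weight one. -/
def IsStopping {m n : ℕ} (F : Matrix (Fin m) (Fin n) Bool) : Prop :=
  ColRegular F ∧ ∀ i, rowWeight F i ≠ 1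

instance {m n : ℕ} (F : Matrix (Fin m) (Fin n) Bool) : Decidable (ColRegular F) :=
  inferInstanceAs (Decidable (∀ j, colWeight F j = 1))

instance {m n : ℕ} (F : Matrix (Fin m) (Fin n) Bool) : Decidable (IsStopping F) :=
  inferInstanceAs (Decidable (ColRegular F ∧ ∀ i, rowWeight F i ≠ 1))

/-- `z m n` is the number of `m × n` stopping matrices. -/
def z (m n : ℕ) : ℕ :=
  Fintype.card {F : Matrix (Fin m) (Fin n) Bool // IsStopping F}

/-- `Psi h e b` is the number of `h`-tuples `(C 1, …, C h)` of subsets of a fixed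
`e`-element set with `|C i| = b i` for every `i` and whose union is the whole set. -/
def Psi (h e : ℕ) (b : Fin h → ℕ) : ℕ :=
  Fintype.card {C : Fin h → Finset (Fin e) //
    (∀ i, (C i).card = b i) ∧ Finset.univ.biUnion C = Finset.univ}

/-- In a column-regular matrix, column `j` is pivotal if the (unique) row containing the
nonzero entry of column `j` has weight one. -/
def Pivotal {m n : ℕ} (F : Matrix (Fin m) (Fin n) Bool) (j : Fin n) : Prop :=
  ∃ i, F i j = true ∧ rowWeight F i = 1

instance {m n : ℕ} (F : Matrix (Fin m) (Fin n) Bool) (j : Fin n) : Decidable (Pivotal F j) :=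
  inferInstanceAs (Decidable (∃ i, F i j = true ∧ rowWeight F i = 1))

/-- Given an `h`-tuple of matrices, column `j` is initially extractable if it is pivotal
in at least one matrix of the tuple. -/
def Extractable {m n h : ℕ} (G : Fin h → Matrix (Fin m) (Fin n) Bool) (j : Fin n) : Prop :=
  ∃ i, Pivotal (G i) j

instance {m n h : ℕ} (G : Fin h → Matrix (Fin m) (Fin n) Bool) (j : Fin n) :
    Decidable (Extractable G j) :=
  inferInstanceAs (Decidable (∃ i, Pivotal (G i) j))

/-- The count `Θ(N_H, f, h, e)` from Lemma 2. -/
def Theta (NH f h e : ℕ) : ℕ :=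
  f.choose e * ∑ b ∈ Fintype.piFinset (fun _ : Fin h => Finset.range (e + 1)),
    Psi h e b * ∏ i, (NH.choose (b i) * (b i).factorial * z (NH - b i) (f - b i))

/-!
A column-regular matrix is the same as the function sending each column to the row of its
nonzero entry, and a column is pivotal exactly when it is alone in its row. So the `h`-tuples are
the `N_H^{hf}` tuples of functions `Fin f → Fin N_H`, and the extractable columns form the union
of their pivot sets. Injecting a set `C` of `b` columns into the rows and mapping the other
columns, without creating pivots, into the `N_H - b` rows not hit gives distinct functions with
pivot set exactly `C`, so at least `N_H (N_H - 1) ⋯ (N_H - b + 1) · z(N_H - b, f - b)` functions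
have pivot set `C`. Summing over the tuples `(C_i)` covering a set `E`, grouped by their sizes
`b`, and then over the `C(f, e)` sets `E` of size `e`, bounds `Θ(N_H, f, h, e)` by the number of
tuples with exactly `e` extractable columns. The tuples with at least `⌈R f⌉` and those with
fewer extractable columns split all `N_H^{hf}` tuples.
-/

open Finset

section Pivots

variable {α β : Type*} [Fintype α] [DecidableEq α] [DecidableEq β]

def pivots (r : α → β) : Finset α :=
  {j | ∀ j', r j' = r j → j' = j}

lemma mem_pivots {r : α → β} {j : α} : j ∈ pivots r ↔ ∀ j', r j' = r j → j' = j := by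
  simp [pivots]

lemma pivots_eq_empty_iff {r : α → β} : pivots r = ∅ ↔ ∀ j, ∃ j', j' ≠ j ∧ r j' = r j := by
  simp only [eq_empty_iff_forall_notMem, mem_pivots, not_forall, exists_prop, and_comm]

lemma card_fiber_eq_one_iff_mem_pivots {r : α → β} {j : α} :
    #{j' | r j' = r j} = 1 ↔ j ∈ pivots r := by
  rw [card_eq_one, mem_pivots]
  constructor
  · rintro ⟨a, ha⟩ j' hj'
    have hj : j ∈ ({a} : Finset α) := ha ▸ by simp
    have hj'' : j' ∈ ({a} : Finset α) := ha ▸ by simpa using hj'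
    rw [mem_singleton] at hj hj''
    rw [hj, hj'']
  · intro hj
    exact ⟨j, by ext j'; simpa using ⟨hj j', by rintro rfl; rfl⟩⟩

lemma exists_card_fiber_eq_one_iff {r : α → β} :
    (∃ i, #{j | r j = i} = 1) ↔ (pivots r).Nonempty := by
  constructor
  · rintro ⟨i, hi⟩
    obtain ⟨j, hj⟩ := card_eq_one.mp hi
    have hji : r j = i := by
      have : j ∈ ({j | r j = i} : Finset α) := hj ▸ mem_singleton_self j
      simpa using this
    subst hji
    exact ⟨j, card_fiber_eq_one_iff_mem_pivots.mp hi⟩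
  · rintro ⟨j, hj⟩
    exact ⟨r j, card_fiber_eq_one_iff_mem_pivots.mpr hj⟩

lemma card_pivots_eq_empty_congr {α' β' : Type*} [Fintype α'] [DecidableEq α'] [DecidableEq β']
    [Fintype β] [Fintype β'] (eα : α ≃ α') (eβ : β ≃ β') :
    Fintype.card {s : α → β // pivots s = ∅} = Fintype.card {s : α' → β' // pivots s = ∅} := by
  refine Fintype.card_congr (Equiv.subtypeEquiv (eα.arrowCongr eβ) fun s => ?_)
  simp only [pivots_eq_empty_iff, Equiv.arrowCongr_apply, Function.comp_apply,
    EmbeddingLike.apply_eq_iff_eq]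
  rw [eα.symm.forall_congr_left]
  refine forall_congr' fun j => ?_
  rw [eα.symm.exists_congr_left]
  simp

end Pivots

section RowFun

variable {m n : ℕ}

def ofRowFun (r : Fin n → Fin m) : Matrix (Fin m) (Fin n) Bool :=
  fun i j => decide (i = r j)

lemma rowWeight_ofRowFun (r : Fin n → Fin m) (i : Fin m) :
    rowWeight (ofRowFun r) i = #{j | r j = i} := by
  simp [rowWeight, ofRowFun, eq_comm]

lemma colRegular_ofRowFun (r : Fin n → Fin m) : ColRegular (ofRowFun r) := fun j => by
  rw [colWeight, card_eq_one]
  exact ⟨r j, by ext i; simp [ofRowFun]⟩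

lemma ofRowFun_injective : Function.Injective (ofRowFun (m := m) (n := n)) := fun r r' h =>
  funext fun j => by simpa [ofRowFun] using congr_fun (congr_fun h (r j)) j

lemma exists_ofRowFun_eq {F : Matrix (Fin m) (Fin n) Bool} (hF : ColRegular F) :
    ∃ r, ofRowFun r = F := by
  choose r hr using fun j => card_eq_one.mp (hF j)
  refine ⟨r, funext fun i => funext fun j => ?_⟩
  have hmem : F i j = true ↔ i = r j := by simpa using Finset.ext_iff.mp (hr j) i
  rw [Bool.eq_iff_iff, hmem]
  simp [ofRowFun]

lemma pivotal_ofRowFun_iff {r : Fin n → Fin m} {j : Fin n} :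
    Pivotal (ofRowFun r) j ↔ j ∈ pivots r := by
  simp [Pivotal, ofRowFun, rowWeight_ofRowFun, card_fiber_eq_one_iff_mem_pivots]

lemma isStopping_ofRowFun_iff {r : Fin n → Fin m} : IsStopping (ofRowFun r) ↔ pivots r = ∅ := by
  simp only [IsStopping, colRegular_ofRowFun, true_and, rowWeight_ofRowFun, ← not_exists,
    exists_card_fiber_eq_one_iff, not_nonempty_iff_eq_empty]

noncomputable def colRegularEquiv :
    (Fin n → Fin m) ≃ {F : Matrix (Fin m) (Fin n) Bool // ColRegular F} :=
  Equiv.ofBijective (fun r => ⟨ofRowFun r, colRegular_ofRowFun r⟩)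
    ⟨fun _ _ h => ofRowFun_injective (congrArg Subtype.val h),
      fun F => (exists_ofRowFun_eq F.2).imp fun _ h => Subtype.ext h⟩

@[simp]
lemma colRegularEquiv_apply_coe (r : Fin n → Fin m) : (colRegularEquiv r).1 = ofRowFun r := rfl

lemma z_eq_card (m n : ℕ) : z m n = Fintype.card {s : Fin n → Fin m // pivots s = ∅} :=
  Fintype.card_congr <|
    (Equiv.subtypeSubtypeEquivSubtypeInter ColRegular fun F => ∀ i, rowWeight F i ≠ 1).symm.trans
      (colRegularEquiv.subtypeEquiv (p := fun s => pivots s = ∅)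
        (q := fun F => ∀ i, rowWeight F.1 i ≠ 1) fun _ => by
          simpa [IsStopping, colRegular_ofRowFun] using isStopping_ofRowFun_iff.symm).symm

end RowFun

section Glue

variable {α β : Type*} {C : Finset α}

lemma card_notMem_map [Fintype β] [DecidableEq β] (σ : C ↪ β) :
    Fintype.card {i // i ∉ univ.map σ} = Fintype.card β - #C := by
  rw [Fintype.card_subtype_compl, Fintype.card_coe, card_map, card_univ, Fintype.card_coe]

variable [DecidableEq α]

def glue (σ : C ↪ β) (s : {j // j ∉ C} → {i // i ∉ univ.map σ}) : α → β :=
  fun j => if hj : j ∈ C then σ ⟨j, hj⟩ else s ⟨j, hj⟩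

lemma glue_of_mem (σ : C ↪ β) (s : {j // j ∉ C} → {i // i ∉ univ.map σ}) {j : α} (hj : j ∈ C) :
    glue σ s j = σ ⟨j, hj⟩ :=
  dif_pos hj

lemma glue_of_notMem (σ : C ↪ β) (s : {j // j ∉ C} → {i // i ∉ univ.map σ}) {j : α}
    (hj : j ∉ C) : glue σ s j = s ⟨j, hj⟩ :=
  dif_neg hj

lemma eq_of_glue_eq_glue {σ σ' : C ↪ β} {s : {j // j ∉ C} → {i // i ∉ univ.map σ}}
    {s' : {j // j ∉ C} → {i // i ∉ univ.map σ'}} (h : glue σ s = glue σ' s') : σ = σ' := by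
  ext ⟨j, hj⟩
  simpa [glue_of_mem _ _ hj] using congr_fun h j

lemma glue_injective (σ : C ↪ β) :
    Function.Injective (glue σ) := fun s s' h =>
  funext fun ⟨j, hj⟩ => Subtype.ext <| by simpa [glue_of_notMem _ _ hj] using congr_fun h j

lemma pivots_glue [Fintype α] [DecidableEq β] (σ : C ↪ β)
    {s : {j // j ∉ C} → {i // i ∉ univ.map σ}} (hs : pivots s = ∅) :
    pivots (glue σ s) = C := by
  ext j
  rw [mem_pivots]
  by_cases hj : j ∈ C
  · simp only [hj, iff_true]
    intro j' hj'
    by_cases hj'C : j' ∈ C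
    · rw [glue_of_mem _ _ hj, glue_of_mem _ _ hj'C] at hj'
      exact congrArg Subtype.val (σ.injective hj')
    · rw [glue_of_mem _ _ hj, glue_of_notMem _ _ hj'C] at hj'
      exact absurd (hj' ▸ mem_map_of_mem σ (mem_univ _)) (s ⟨j', hj'C⟩).2
  · simp only [hj, iff_false, not_forall]
    obtain ⟨⟨j', hj'C⟩, hne, hsj⟩ := pivots_eq_empty_iff.mp hs ⟨j, hj⟩
    refine ⟨j', ?_, fun h => hne (Subtype.ext h)⟩
    rw [glue_of_notMem _ _ hj, glue_of_notMem _ _ hj'C, hsj]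

lemma card_notMem [Fintype α] (C : Finset α) : Fintype.card {j // j ∉ C} = Fintype.card α - #C := by
  rw [Fintype.card_subtype_compl, Fintype.card_coe]

lemma descFactorial_mul_z_le_card_pivots_eq [Fintype α] [Fintype β] [DecidableEq β]
    (C : Finset α) :
    (Fintype.card β).descFactorial #C * z (Fintype.card β - #C) (Fintype.card α - #C) ≤
      #{r : α → β | pivots r = C} := by
  let Pairs := Σ σ : C ↪ β, {s : {j // j ∉ C} → {i // i ∉ univ.map σ} // pivots s = ∅}
  have hcard : Fintype.card Pairs =
      (Fintype.card β).descFactorial #C * z (Fintype.card β - #C) (Fintype.card α - #C) := by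
    have hz (σ : C ↪ β) : Fintype.card {s : {j // j ∉ C} → {i // i ∉ univ.map σ} // pivots s = ∅}
        = z (Fintype.card β - #C) (Fintype.card α - #C) := by
      rw [z_eq_card]
      exact card_pivots_eq_empty_congr
        (Fintype.equivFinOfCardEq (card_notMem C)) (Fintype.equivFinOfCardEq (card_notMem_map σ))
    rw [Fintype.card_sigma, sum_congr rfl fun σ _ => hz σ, sum_const, card_univ,
      Fintype.card_embedding_eq, Fintype.card_coe, smul_eq_mul]
  rw [← hcard, ← Fintype.card_subtype]
  refine Fintype.card_le_of_injective (fun p => ⟨glue p.1 p.2.1, pivots_glue p.1 p.2.2⟩) ?_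
  rintro ⟨σ, s, hs⟩ ⟨σ', s', hs'⟩ h
  obtain rfl := eq_of_glue_eq_glue (congrArg Subtype.val h)
  obtain rfl := glue_injective σ (congrArg Subtype.val h)
  rfl

end Glue

section Tuples

variable {ι α β : Type*} [Fintype ι] [DecidableEq ι] [Fintype α] [DecidableEq α]
  [Fintype β] [DecidableEq β]

def extractableSet (rs : ι → α → β) : Finset α :=
  univ.biUnion fun i => pivots (rs i)

lemma card_filter_forall_pivots_eq (C : ι → Finset α) :
    #{rs : ι → α → β | ∀ i, pivots (rs i) = C i} = ∏ i, #{r : α → β | pivots r = C i} := by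
  rw [← Fintype.card_piFinset]
  congr 1
  ext rs
  simp [Fintype.mem_piFinset]

lemma card_filter_extractableSet_eq (E : Finset α) :
    #{rs : ι → α → β | extractableSet rs = E} =
      ∑ C ∈ {C : ι → Finset α | univ.biUnion C = E}, ∏ i, #{r : α → β | pivots r = C i} := by
  rw [card_eq_sum_card_fiberwise (f := fun rs i => pivots (rs i))
    (t := {C : ι → Finset α | univ.biUnion C = E})]
  · refine sum_congr rfl fun C hC => ?_
    rw [← card_filter_forall_pivots_eq, filter_filter]
    congr 1
    ext rs
    simp only [mem_filter, mem_univ, true_and] at hC ⊢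
    constructor
    · rintro ⟨-, rfl⟩ i
      rfl
    · intro h
      obtain rfl : (fun i => pivots (rs i)) = C := funext h
      exact ⟨hC, rfl⟩
  · intro rs hrs
    exact mem_coe.mpr (mem_filter.mpr ⟨mem_univ _, (mem_filter.mp (mem_coe.mp hrs)).2⟩)

end Tuples

section Covers

variable {α : Type*} [Fintype α] [DecidableEq α] {h : ℕ}

lemma card_covers_eq_Psi {e : ℕ} {E : Finset α} (hE : #E = e) (b : Fin h → ℕ) :
    #{C : Fin h → Finset α | (∀ i, #(C i) = b i) ∧ univ.biUnion C = E} = Psi h e b := by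
  let ι : Fin e ↪ α := (E.equivFinOfCardEq hE).symm.toEmbedding.trans (Function.Embedding.subtype _)
  have hι : univ.map ι = E := by
    ext x
    simp only [mem_map, mem_univ, true_and]
    refine ⟨fun ⟨a, ha⟩ => ha ▸ ((E.equivFinOfCardEq hE).symm a).2, fun hx => ?_⟩
    exact ⟨E.equivFinOfCardEq hE ⟨x, hx⟩, by simp [ι]⟩
  let Φ : (Fin h → Finset (Fin e)) ↪ (Fin h → Finset α) :=
    Function.Embedding.piCongrRight fun _ => (mapEmbedding ι).toEmbedding
  have hΦ (C : Fin h → Finset (Fin e)) (i : Fin h) : Φ C i = (C i).map ι := rfl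
  rw [Psi, Fintype.card_subtype, ← card_map Φ]
  congr 1
  ext D
  simp only [mem_filter, mem_univ, true_and, mem_map]
  constructor
  · rintro ⟨hD, hDE⟩
    have hsub (i : Fin h) : D i ⊆ univ.map ι := by
      rw [hι, ← hDE]
      exact subset_biUnion_of_mem D (mem_univ i)
    choose C _ hC using fun i => subset_map_iff.mp (hsub i)
    refine ⟨C, ⟨fun i => ?_, map_injective ι ?_⟩, funext fun i => (hC i).symm⟩
    · rw [← hD i, hC i, card_map]
    · rw [hι, ← hDE, map_eq_image, biUnion_image]
      exact biUnion_congr rfl fun i _ => by rw [hC i, map_eq_image]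
  · rintro ⟨C, ⟨hC, hCE⟩, rfl⟩
    refine ⟨fun i => by rw [hΦ, card_map, hC], ?_⟩
    rw [← hι, ← hCE, map_eq_image, biUnion_image]
    exact biUnion_congr rfl fun i _ => by rw [hΦ, map_eq_image]

lemma sum_covers_eq_sum_Psi {e : ℕ} {E : Finset α} (hE : #E = e) (w : ℕ → ℕ) :
    ∑ C ∈ {C : Fin h → Finset α | univ.biUnion C = E}, ∏ i, w #(C i) =
      ∑ b ∈ Fintype.piFinset fun _ : Fin h => range (e + 1), Psi h e b * ∏ i, w (b i) := by
  rw [← sum_fiberwise_of_maps_to (g := fun C i => #(C i))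
    (t := Fintype.piFinset fun _ : Fin h => range (e + 1))]
  · refine sum_congr rfl fun b _ => ?_
    rw [sum_congr rfl fun C hC => show ∏ i, w #(C i) = ∏ i, w (b i) by
      rw [← (mem_filter.mp hC).2], sum_const, smul_eq_mul, ← card_covers_eq_Psi hE, filter_filter]
    congr 2
    ext C
    simp only [funext_iff, and_comm]
  · intro C hC
    simp only [mem_filter, mem_univ, true_and] at hC
    simp only [Fintype.mem_piFinset, mem_range, Nat.lt_succ_iff]
    exact fun i => hE ▸ hC ▸ card_le_card (subset_biUnion_of_mem C (mem_univ i))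

lemma sum_Psi_le_card_filter_extractableSet_eq {β : Type*} [Fintype β] [DecidableEq β] {e : ℕ}
    {E : Finset α} (hE : #E = e) :
    ∑ b ∈ Fintype.piFinset fun _ : Fin h => range (e + 1), Psi h e b *
        ∏ i, ((Fintype.card β).descFactorial (b i) *
          z (Fintype.card β - b i) (Fintype.card α - b i)) ≤
      #{rs : Fin h → α → β | extractableSet rs = E} := by
  rw [← sum_covers_eq_sum_Psi hE fun b => (Fintype.card β).descFactorial b *
    z (Fintype.card β - b) (Fintype.card α - b), card_filter_extractableSet_eq]
  exact sum_le_sum fun C _ => prod_le_prod' fun i _ => descFactorial_mul_z_le_card_pivots_eq (C i)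

end Covers

lemma Theta_le_card_filter (NH f h e : ℕ) :
    Theta NH f h e ≤ #{rs : Fin h → Fin f → Fin NH | #(extractableSet rs) = e} := by
  have hinner (E : Finset (Fin f)) (hE : #E = e) :
      ∑ b ∈ Fintype.piFinset fun _ : Fin h => range (e + 1),
          Psi h e b * ∏ i, (NH.choose (b i) * (b i).factorial * z (NH - b i) (f - b i)) ≤
        #{rs : Fin h → Fin f → Fin NH | extractableSet rs = E} := by
    refine le_of_eq_of_le (sum_congr rfl fun b _ => ?_)
      (sum_Psi_le_card_filter_extractableSet_eq (β := Fin NH) hE)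
    simp only [Fintype.card_fin, Nat.descFactorial_eq_factorial_mul_choose]
    exact congrArg _ (prod_congr rfl fun i _ => by ring)
  rw [card_eq_sum_card_fiberwise (f := extractableSet) (t := powersetCard e univ)]
  · rw [Theta, show f.choose e = #(powersetCard e (univ : Finset (Fin f))) by simp,
      ← smul_eq_mul, ← sum_const]
    refine sum_le_sum fun E hE => (hinner E (mem_powersetCard.mp hE).2).trans_eq ?_
    rw [filter_filter]
    exact congrArg card <| filter_congr fun rs _ =>
      ⟨fun h => ⟨h ▸ (mem_powersetCard.mp hE).2, h⟩, And.right⟩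
  · intro rs hrs
    simpa using mem_coe.mp hrs

lemma sum_Theta_le_card_filter (NH f h m : ℕ) :
    ∑ e ∈ Icc m f, Theta NH f h e ≤ #{rs : Fin h → Fin f → Fin NH | m ≤ #(extractableSet rs)} := by
  rw [card_eq_sum_card_fiberwise (f := fun rs => #(extractableSet rs)) (t := Icc m f)]
  · refine sum_le_sum fun e he => (Theta_le_card_filter NH f h e).trans_eq ?_
    rw [filter_filter]
    exact congrArg card <| filter_congr fun rs _ =>
      ⟨fun h => ⟨h ▸ (mem_Icc.mp he).1, h⟩, And.right⟩
  · intro rs hrs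
    simp only [coe_filter, mem_univ, true_and, coe_Icc, Set.mem_Icc] at hrs ⊢
    exact ⟨hrs, (card_le_univ _).trans_eq (Fintype.card_fin f)⟩

lemma div_le_one_sub_div_of_add_le {a s P : ℝ} (hP : 0 ≤ P) (h : a + s ≤ P) :
    a / P ≤ 1 - s / P := by
  rw [le_sub_iff_add_le, ← add_div]
  exact div_le_one_of_le₀ h hP

section Matrices

variable {m n h : ℕ}

noncomputable def regularTupleEquiv :
    (Fin h → Fin n → Fin m) ≃ {G : Fin h → Matrix (Fin m) (Fin n) Bool // ∀ i, ColRegular (G i)} :=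
  (Equiv.piCongrRight fun _ => colRegularEquiv).trans Equiv.subtypePiEquivPi.symm

lemma filter_extractable_ofRowFun (rs : Fin h → Fin n → Fin m) :
    univ.filter (fun j => Extractable (fun i => ofRowFun (rs i)) j) = extractableSet rs := by
  ext j
  simp [Extractable, extractableSet, pivotal_ofRowFun_iff]

lemma natCard_colRegular_tuples (P : Finset (Fin n) → Prop) :
    Nat.card {G : Fin h → Matrix (Fin m) (Fin n) Bool //
        (∀ i, ColRegular (G i)) ∧ P (univ.filter fun j => Extractable G j)} =
      Nat.card {rs : Fin h → Fin n → Fin m // P (extractableSet rs)} :=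
  Nat.card_congr <| (Equiv.subtypeSubtypeEquivSubtypeInter _ _).symm.trans <|
    (regularTupleEquiv.subtypeEquiv fun rs => by
      rw [← filter_extractable_ofRowFun]
      rfl).symm

end Matrices

theorem extraction_failure_probability_bound_general (NH f h : ℕ) (R : ℝ) :
    (Nat.card {G : Fin h → Matrix (Fin NH) (Fin f) Bool //
          (∀ i, ColRegular (G i)) ∧
          ((Finset.univ.filter (fun j => Extractable G j)).card : ℝ) < R * f} : ℝ) /
        (NH : ℝ) ^ (h * f) ≤
      1 - (∑ e ∈ Finset.Icc ⌈R * (f : ℝ)⌉₊ f, (Theta NH f h e : ℝ)) /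
        (NH : ℝ) ^ (h * f) := by
  set m := ⌈R * (f : ℝ)⌉₊
  have hfail : Nat.card {G : Fin h → Matrix (Fin NH) (Fin f) Bool //
      (∀ i, ColRegular (G i)) ∧ ((univ.filter (fun j => Extractable G j)).card : ℝ) < R * f} =
      #{rs : Fin h → Fin f → Fin NH | #(extractableSet rs) < m} := by
    simp_rw [natCard_colRegular_tuples fun s => (#s : ℝ) < R * f, m, Nat.lt_ceil.symm,
      Nat.card_eq_fintype_card, Fintype.card_subtype]
  have hsplit : #{rs : Fin h → Fin f → Fin NH | #(extractableSet rs) < m} +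
      #{rs : Fin h → Fin f → Fin NH | m ≤ #(extractableSet rs)} = NH ^ (h * f) := by
    simp_rw [← not_lt, card_filter_add_card_filter_not, card_univ, Fintype.card_fun,
      Fintype.card_fin, ← pow_mul, mul_comm]
  have hsucc := sum_Theta_le_card_filter NH f h m
  refine div_le_one_sub_div_of_add_le (by positivity) ?_
  rw [hfail]
  exact_mod_cast (by omega : _ + ∑ e ∈ Icc m f, Theta NH f h e ≤ NH ^ (h * f))

/-- (Theorem 2.) For `N_H ≥ 1`, `f ≥ 1`, `h ≥ 1` and a desired
extraction rate `R ∈ [0, 1]`, under the uniform distribution on all `N_H^{h·f}`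
`h`-tuples of `N_H × f` column-regular binary matrices, the probability that the number
of initially extractable columns is strictly less than `R·f` is at most
`1 − Σ_{e=⌈R·f⌉}^{f} Θ(N_H, f, h, e) / N_H^{h·f}`. -/
theorem extraction_failure_probability_bound (NH f h : ℕ)
    (hNH : 1 ≤ NH) (hf : 1 ≤ f) (hh : 1 ≤ h) (R : ℝ) (hR0 : 0 ≤ R) (hR1 : R ≤ 1) :
    (Nat.card {G : Fin h → Matrix (Fin NH) (Fin f) Bool //
          (∀ i, ColRegular (G i)) ∧
          ((Finset.univ.filter (fun j => Extractable G j)).card : ℝ) < R * f} : ℝ) /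
        (NH : ℝ) ^ (h * f) ≤
      1 - (∑ e ∈ Finset.Icc ⌈R * (f : ℝ)⌉₊ f, (Theta NH f h e : ℝ)) /
        (NH : ℝ) ^ (h * f) :=
  extraction_failure_probability_bound_general NH f h R
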